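/- arXiv:1407.4787 — 4 statements merged into one kernel-verified Lean document; each statement's English description precedes it below -/
import Mathlib

section
/- If φ solves the pendulum equation with φ(t*) = π/2 and φ'(t*) ≤ 0 at some t* > t₀, and φ(t) ∈ [−π/2, π/2] on [t₀, t*], then in fact either φ'(t*) < 0, in which case φ(t) < π/2 on some interval (t* − δ, t*), or φ'(t*) = 0, in which case φ(t) > π/2 for t slightly less than t* — contradicting the invariance; hence a solution entering the strip from the interior can only exit through the set {φ = π/2, φ' > 0} ∪ {φ = −π/2, φ' < 0}. -/
/-!
At `φ = π/2` the equation reads `φ'' = g/l > 0`, whatever the forcing. If `φ` reached `π/2`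
from below with `φ' ≤ 0`, then either `φ' < 0` or, by the second-derivative test, `φ` has a
local minimum there; both force `φ ≥ π/2` just before the exit time, which is absurd. The exit
through `-π/2` follows by the symmetry `(φ, f) ↦ (-φ, -f)` of the equation.
-/

open Real Filter Topology Set

lemma eventually_nhdsLT_lt_of_deriv_neg {f : ℝ → ℝ} {b : ℝ} (hf : deriv f b < 0) :
    ∀ᶠ t in 𝓝[<] b, f b < f t := by
  have hslope := hasDerivAt_iff_tendsto_slope.mp
    (differentiableAt_of_deriv_ne_zero hf.ne).hasDerivAt
  have hleft : 𝓝[<] b ≤ 𝓝[≠] b := nhdsWithin_mono _ fun _ ht => ne_of_lt ht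
  filter_upwards [(hslope.mono_left hleft).eventually (eventually_lt_nhds hf),
    self_mem_nhdsWithin] with t hneg ht
  rw [slope_comm] at hneg
  exact (slope_neg_iff_of_le (le_of_lt ht)).mp hneg

lemma deriv_pos_of_eventually_lt_left {f : ℝ → ℝ} {b : ℝ} (hc : ContinuousAt f b)
    (hf'' : 0 < deriv (deriv f) b) (hlt : ∀ᶠ t in 𝓝[<] b, f t < f b) : 0 < deriv f b := by
  by_contra! hf'
  have hge : ∀ᶠ t in 𝓝[<] b, f b ≤ f t := by
    rcases hf'.lt_or_eq with hneg | hzero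
    · exact (eventually_nhdsLT_lt_of_deriv_neg hneg).mono fun _ h => h.le
    · exact nhdsWithin_le_nhds (isLocalMin_of_deriv_deriv_pos hf'' hzero hc)
  obtain ⟨t, hlt_t, hge_t⟩ := (hlt.and hge).exists
  exact (hlt_t.trans_le hge_t).false

def PendulumODE (g l : ℝ) (f φ : ℝ → ℝ) : Prop :=
  ∀ t, deriv (deriv φ) t = (g / l) * sin (φ t) - (deriv (deriv f) t / l) * cos (φ t)

namespace PendulumODE

variable {g l : ℝ} {f φ : ℝ → ℝ}

lemma neg (h : PendulumODE g l f φ) : PendulumODE g l (-f) (-φ) := by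
  intro t
  simp only [deriv.neg', deriv.fun_neg', Pi.neg_apply, sin_neg, cos_neg, h t]
  ring

lemma deriv_deriv_pos_of_eq_pi_div_two (h : PendulumODE g l f φ) (hg : 0 < g) (hl : 0 < l)
    {t : ℝ} (ht : φ t = π / 2) : 0 < deriv (deriv φ) t := by
  rw [h t, ht, sin_pi_div_two, cos_pi_div_two]
  simpa using div_pos hg hl

lemma deriv_pos_of_first_hit_pi_div_two (h : PendulumODE g l f φ) (hg : 0 < g) (hl : 0 < l)
    (hφ : Continuous φ) {t₀ ts : ℝ} (hts : t₀ < ts) (hhit : φ ts = π / 2)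
    (hbelow : ∀ t ∈ Ico t₀ ts, φ t < π / 2) : 0 < deriv φ ts := by
  refine deriv_pos_of_eventually_lt_left hφ.continuousAt
    (h.deriv_deriv_pos_of_eq_pi_div_two hg hl hhit) ?_
  filter_upwards [Ioo_mem_nhdsLT hts] with t ht
  exact hhit ▸ hbelow t ⟨ht.1.le, ht.2⟩

end PendulumODE

theorem stmt_4_general (g l : ℝ) (hg : 0 < g) (hl : 0 < l)
    (f φ : ℝ → ℝ) (hφ : ContDiff ℝ 2 φ)
    (hode : ∀ t, deriv (deriv φ) t =
      (g / l) * Real.sin (φ t) - (deriv (deriv f) t / l) * Real.cos (φ t))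
    (t₀ ts : ℝ) (hts : t₀ < ts)
    (hexit : |φ ts| = π / 2) (hfirst : ∀ t ∈ Set.Ico t₀ ts, |φ t| < π / 2) :
    0 < φ ts * deriv φ ts := by
  have hode : PendulumODE g l f φ := hode
  rcases (abs_eq (by positivity)).mp hexit with hhit | hhit
  · have hpos : 0 < deriv φ ts :=
      hode.deriv_pos_of_first_hit_pi_div_two hg hl hφ.continuous hts hhit
        fun t ht => (abs_lt.mp (hfirst t ht)).2
    rw [hhit]
    positivity
  · have hneg : deriv φ ts < 0 := by
      simpa using hode.neg.deriv_pos_of_first_hit_pi_div_two hg hl hφ.continuous.neg hts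
        (by simp [hhit]) fun t ht => by simpa using neg_lt.mp (abs_lt.mp (hfirst t ht)).1
    rw [hhit]
    exact mul_pos_of_neg_of_neg (by linarith [pi_pos]) hneg

theorem stmt_4 (g l : ℝ) (hg : 0 < g) (hl : 0 < l)
    (f φ : ℝ → ℝ) (hf : ContDiff ℝ 2 f) (hφ : ContDiff ℝ 2 φ)
    (hode : ∀ t, deriv (deriv φ) t =
      (g / l) * Real.sin (φ t) - (deriv (deriv f) t / l) * Real.cos (φ t))
    (t₀ ts : ℝ) (h0 : φ t₀ ∈ Set.Ioo (-(π / 2)) (π / 2)) (hts : t₀ < ts)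
    (hexit : |φ ts| = π / 2) (hfirst : ∀ t ∈ Set.Ico t₀ ts, |φ t| < π / 2) :
    0 < φ ts * deriv φ ts :=
  stmt_4_general g l hg hl f φ hφ hode t₀ ts hts hexit hfirst
end

section
/- For every C² function f : [0, ∞) → ℝ there exists φ₀ ∈ (−π/2, π/2) such that the solution of φ'' = (g/l)·sin φ − (f''/l)·cos φ with initial conditions φ(0) = φ₀, φ'(0) = 0 satisfies −π/2 < φ(t) < π/2 for all t ∈ [0, ∞). -/
/-!
The proof is the shooting argument of Courant and Robbins. On every bounded time interval the
right-hand side is bounded and Lipschitz in `φ`, so every initial angle `a` gives a global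
solution `φ_a` with `φ_a' 0 = 0`, and `φ_a` depends Lipschitz-continuously on `a`, uniformly on
bounded time intervals. The angles whose pendulum first leaves `(-π/2, π/2)` through `π/2`, and
those whose pendulum first leaves it through `-π/2`, form disjoint open sets, the first containing
`π/2` and the second `-π/2`: at `φ = ±π/2` the acceleration is `±g/l`, so the pendulum cannot
touch the edge of the strip without crossing it. Since `[-π/2, π/2]` is connected, some initial
angle lies in neither set, and its pendulum never falls.
-/

open Real Set Filter Topology
open scoped NNReal

namespace InvertedPendulum

section FirstOrder

variable {E : Type*} [NormedAddCommGroup E] [NormedSpace ℝ E] {v : ℝ → E → E}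

theorem exists_forall_hasDerivAt_of_forall_exists_Ioo {x₀ : E}
    (hv : ∀ T, ∃ K, ∀ t ∈ Ioo (-T) T, LipschitzWith K (v t))
    (hex : ∀ T > 0, ∃ α : ℝ → E, α 0 = x₀ ∧ ∀ t ∈ Ioo (-T) T, HasDerivAt α (v t (α t)) t) :
    ∃ α : ℝ → E, α 0 = x₀ ∧ ∀ t, HasDerivAt α (v t (α t)) t := by
  choose α hα0 hα using fun n : ℕ => hex (n + 1) (by positivity)
  have hagree : ∀ (m n : ℕ) (t : ℝ), t ∈ Ioo (-(m + 1 : ℝ)) (m + 1) →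
      t ∈ Ioo (-(n + 1 : ℝ)) (n + 1) → α m t = α n t := by
    intro m n t hm hn
    set c : ℝ := min (m + 1) (n + 1)
    obtain ⟨K, hK⟩ := hv c
    have hc : 0 < c := lt_min (by positivity) (by positivity)
    have hsub : ∀ k : ℕ, c ≤ k + 1 → Ioo (-c) c ⊆ Ioo (-(k + 1 : ℝ)) (k + 1) :=
      fun k hk => Ioo_subset_Ioo (neg_le_neg hk) hk
    refine ODE_solution_unique_of_mem_Ioo (s := fun _ => univ)
      (fun t ht => (hK t ht).lipschitzOnWith) (t₀ := 0) ⟨by linarith, hc⟩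
      (fun t ht => ⟨hα m t (hsub m (min_le_left _ _) ht), trivial⟩)
      (fun t ht => ⟨hα n t (hsub n (min_le_right _ _) ht), trivial⟩)
      ((hα0 m).trans (hα0 n).symm) ⟨neg_lt.2 (lt_min (neg_lt.1 hm.1) (neg_lt.1 hn.1)),
        lt_min hm.2 hn.2⟩
  have hmem (t : ℝ) : t ∈ Ioo (-(⌈|t|⌉₊ + 1 : ℝ)) (⌈|t|⌉₊ + 1) :=
    abs_lt.1 ((Nat.le_ceil _).trans_lt (lt_add_one _))
  refine ⟨fun t => α ⌈|t|⌉₊ t, by simpa using hα0 0, fun t => ?_⟩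
  have heq : (fun s => α ⌈|s|⌉₊ s) =ᶠ[𝓝 t] α ⌈|t|⌉₊ :=
    eventually_of_mem (isOpen_Ioo.mem_nhds (hmem t)) fun s hs => hagree _ _ s (hmem s) hs
  exact (hα _ t (hmem t)).congr_of_eventuallyEq heq

theorem dist_le_exp_mul_dist_of_forall_hasDerivAt {f g : ℝ → E} {K : ℝ≥0} {T : ℝ}
    (hv : ∀ t ∈ Ico 0 T, LipschitzWith K (v t))
    (hf : ∀ t, HasDerivAt f (v t (f t)) t) (hg : ∀ t, HasDerivAt g (v t (g t)) t)
    {t : ℝ} (ht : t ∈ Icc 0 T) :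
    dist (f t) (g t) ≤ exp (K * T) * dist (f 0) (g 0) := by
  have := dist_le_of_trajectories_ODE_of_mem (s := fun _ => univ)
    (fun t ht => (hv t ht).lipschitzOnWith)
    (HasDerivAt.continuousOn fun t _ => hf t) (fun t _ => (hf t).hasDerivWithinAt)
    (fun _ _ => trivial) (HasDerivAt.continuousOn fun t _ => hg t)
    (fun t _ => (hg t).hasDerivWithinAt) (fun _ _ => trivial) le_rfl t ht
  calc dist (f t) (g t) ≤ dist (f 0) (g 0) * exp (K * (t - 0)) := this
    _ ≤ exp (K * T) * dist (f 0) (g 0) := by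
      rw [mul_comm]; gcongr; linarith [ht.2]

end FirstOrder

lemma _root_.HasDerivAt.nonneg_of_eventually_le_left {φ : ℝ → ℝ} {w t₀ : ℝ} (hφ : HasDerivAt φ w t₀)
    (hle : ∀ᶠ s in 𝓝[<] t₀, φ s ≤ φ t₀) : 0 ≤ w := by
  refine ge_of_tendsto (hasDerivAt_iff_tendsto_slope_left_right.1 hφ).1 ?_
  filter_upwards [hle, self_mem_nhdsWithin] with s hs hlt
  rw [slope_def_field]
  exact div_nonneg_of_nonpos (sub_nonpos.2 hs) (sub_nonpos.2 (le_of_lt hlt))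

def secondOrderField (acc : ℝ → ℝ → ℝ) (t : ℝ) (p : ℝ × ℝ) : ℝ × ℝ := (p.2, acc t p.1)

variable {acc : ℝ → ℝ → ℝ}

lemma lipschitzWith_secondOrderField {K : ℝ≥0} {t : ℝ} (hK : LipschitzWith K (acc t)) :
    LipschitzWith (max 1 K) (secondOrderField acc t) := by
  have := (LipschitzWith.prod_snd (α := ℝ) (β := ℝ)).prodMk (hK.comp LipschitzWith.prod_fst)
  rwa [mul_one] at this

lemma exists_hasDerivWithinAt_velocity_clamped (hcont : ∀ x, Continuous (acc · x)) {T : ℝ}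
    (hT : 0 < T) {C : ℝ≥0} (hC : ∀ t ∈ Icc (-T) T, (∀ x, |acc t x| ≤ C) ∧ LipschitzWith C (acc t))
    {B : ℝ} (hB : 0 ≤ B) (p : ℝ × ℝ) :
    ∃ α : ℝ → ℝ × ℝ, α 0 = p ∧ ∀ t ∈ Icc (-T) T,
      HasDerivWithinAt α (max (-B) (min B (α t).2), acc t (α t).1) (Icc (-T) T) t := by
  set L : ℝ≥0 := ⟨max B C, hB.trans (le_max_left _ _)⟩
  have hPL : IsPicardLindelof (fun t q => (max (-B) (min B q.2), acc t q.1))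
      (⟨0, by constructor <;> linarith⟩ : Icc (-T) T) p (L * T.toNNReal) 0 L (max 1 C) := by
    refine ⟨fun t ht => ?_, fun q _ => ?_, fun t ht q _ => ?_, ?_⟩
    · have := (((LipschitzWith.id.const_min B).const_max (-B)).comp
        LipschitzWith.prod_snd).prodMk ((hC t ht).2.comp LipschitzWith.prod_fst)
      simpa using this.lipschitzOnWith
    · exact (continuous_const.prodMk (hcont q.1)).continuousOn
    · rw [Prod.norm_def]
      refine max_le_max ?_ ((hC t ht).1 q.1)
      simp only [Real.norm_eq_abs, abs_le]
      constructor <;> [exact le_max_left _ _; exact max_le (by linarith) (min_le_left _ _)]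
    · rw [NNReal.coe_mul, Real.coe_toNNReal _ hT.le]
      simp
  exact hPL.exists_eq_forall_mem_Icc_hasDerivWithinAt₀

theorem exists_hasDerivAt_secondOrderField_Ioo (hcont : ∀ x, Continuous (acc · x)) {T : ℝ}
    (hT : 0 < T) {C : ℝ≥0} (hC : ∀ t ∈ Icc (-T) T, (∀ x, |acc t x| ≤ C) ∧ LipschitzWith C (acc t))
    (p : ℝ × ℝ) :
    ∃ α : ℝ → ℝ × ℝ, α 0 = p ∧ ∀ t ∈ Ioo (-T) T, HasDerivAt α (secondOrderField acc t (α t)) t := by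
  -- The velocity of the clamped solution stays below `|p.2| + C T < B`, so the clamp is inactive.
  set B : ℝ := |p.2| + C * T + 1
  obtain ⟨α, hα0, hα⟩ :=
    exists_hasDerivWithinAt_velocity_clamped hcont hT hC (by positivity : 0 ≤ B) p
  have hvel : ∀ t ∈ Icc (-T) T, |(α t).2| < B := by
    intro t ht
    have hd : ∀ s ∈ Icc (-T) T,
        HasDerivWithinAt (fun u => (α u).2) (acc s (α s).1) (Icc (-T) T) s :=
      fun s hs => (hasFDerivAt_snd (𝕜 := ℝ) (p := α s)).comp_hasDerivWithinAt s (hα s hs)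
    have hbd := (convex_Icc (-T) T).norm_image_sub_le_of_norm_hasDerivWithin_le hd
      (fun s hs => (hC s hs).1 _) ⟨by linarith, hT.le⟩ ht
    simp only [Real.norm_eq_abs, sub_zero, hα0] at hbd
    have htT : |t| ≤ T := abs_le.2 ht
    calc |(α t).2| ≤ |p.2| + |(α t).2 - p.2| := by
          simpa using abs_add_le p.2 ((α t).2 - p.2)
      _ ≤ |p.2| + C * T := by gcongr; exact hbd.trans (by gcongr)
      _ < B := by linarith
  refine ⟨α, hα0, fun t ht => ?_⟩
  obtain ⟨hlow, hhigh⟩ := abs_lt.1 (hvel t (Ioo_subset_Icc_self ht))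
  have := (hα t (Ioo_subset_Icc_self ht)).hasDerivAt (Icc_mem_nhds ht.1 ht.2)
  rwa [min_eq_right hhigh.le, max_eq_right hlow.le] at this

theorem exists_forall_hasDerivAt_secondOrderField (hcont : ∀ x, Continuous (acc · x))
    (hC : ∀ T, ∃ C : ℝ≥0, ∀ t ∈ Icc (-T) T, (∀ x, |acc t x| ≤ C) ∧ LipschitzWith C (acc t))
    (p : ℝ × ℝ) :
    ∃ α : ℝ → ℝ × ℝ, α 0 = p ∧ ∀ t, HasDerivAt α (secondOrderField acc t (α t)) t := by
  refine exists_forall_hasDerivAt_of_forall_exists_Ioo (fun T => ?_) (fun T hT => ?_)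
  · obtain ⟨C, hC⟩ := hC T
    exact ⟨_, fun t ht => lipschitzWith_secondOrderField (hC t (Ioo_subset_Icc_self ht)).2⟩
  · obtain ⟨C, hC⟩ := hC T
    exact exists_hasDerivAt_secondOrderField_Ioo hcont hT hC p

structure IsSecondOrderSolution (acc : ℝ → ℝ → ℝ) (φ ω : ℝ → ℝ) : Prop where
  hasDerivAt : ∀ t, HasDerivAt φ (ω t) t
  hasDerivAt_velocity : ∀ t, HasDerivAt ω (acc t (φ t)) t

namespace IsSecondOrderSolution

variable {φ ω : ℝ → ℝ}

lemma continuous (hs : IsSecondOrderSolution acc φ ω) : Continuous φ :=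
  continuous_iff_continuousAt.2 fun t => (hs.hasDerivAt t).continuousAt

lemma neg (hs : IsSecondOrderSolution acc φ ω) :
    IsSecondOrderSolution (fun t x => -acc t (-x)) (-φ) (-ω) :=
  ⟨fun t => (hs.hasDerivAt t).neg, fun t => by simpa using (hs.hasDerivAt_velocity t).neg⟩

lemma deriv_deriv (hs : IsSecondOrderSolution acc φ ω) (t : ℝ) :
    deriv (deriv φ) t = acc t (φ t) := by
  rw [show deriv φ = ω from funext fun t => (hs.hasDerivAt t).deriv]
  exact (hs.hasDerivAt_velocity t).deriv

lemma contDiff_two (hs : IsSecondOrderSolution acc φ ω) (hacc : Continuous fun t => acc t (φ t)) :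
    ContDiff ℝ 2 φ := by
  have hω : ContDiff ℝ 1 ω := contDiff_one_iff_deriv.2
    ⟨fun t => (hs.hasDerivAt_velocity t).differentiableAt,
      by rwa [show deriv ω = _ from funext fun t => (hs.hasDerivAt_velocity t).deriv]⟩
  refine (contDiff_succ_iff_deriv (n := 1)).2 ⟨fun t => (hs.hasDerivAt t).differentiableAt,
    by simp, ?_⟩
  rwa [show deriv φ = ω from funext fun t => (hs.hasDerivAt t).deriv]

lemma exists_strictMonoOn_Icc (hs : IsSecondOrderSolution acc φ ω) {t₀ : ℝ}
    (hacc : ContinuousAt (fun t => acc t (φ t)) t₀) (hω₀ : 0 ≤ ω t₀)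
    (hacc₀ : 0 < acc t₀ (φ t₀)) : ∃ u > t₀, StrictMonoOn φ (Icc t₀ u) := by
  obtain ⟨δ, hδ, hpos⟩ := Metric.eventually_nhds_iff.1 (hacc.eventually (lt_mem_nhds hacc₀))
  have hωmono : StrictMonoOn ω (Icc t₀ (t₀ + δ / 2)) := by
    refine strictMonoOn_of_hasDerivWithinAt_pos (convex_Icc _ _)
      (HasDerivAt.continuousOn fun t _ => hs.hasDerivAt_velocity t)
      (fun t _ => (hs.hasDerivAt_velocity t).hasDerivWithinAt) fun t ht => hpos ?_
    rw [interior_Icc] at ht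
    rw [Real.dist_eq, abs_lt]
    constructor <;> linarith [ht.1, ht.2]
  refine ⟨t₀ + δ / 2, by linarith, strictMonoOn_of_hasDerivWithinAt_pos (convex_Icc _ _)
    (HasDerivAt.continuousOn fun t _ => hs.hasDerivAt t)
    (fun t _ => (hs.hasDerivAt t).hasDerivWithinAt) fun t ht => ?_⟩
  rw [interior_Icc] at ht
  exact hω₀.trans_lt (hωmono (left_mem_Icc.2 (by linarith)) (Ioo_subset_Icc_self ht) ht.1)

end IsSecondOrderSolution

theorem exists_isSecondOrderSolution_family (hcont : ∀ x, Continuous (acc · x))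
    (hC : ∀ T, ∃ C : ℝ≥0, ∀ t ∈ Icc (-T) T, (∀ x, |acc t x| ≤ C) ∧ LipschitzWith C (acc t))
    (v₀ : ℝ) :
    ∃ φ ω : ℝ → ℝ → ℝ, (∀ a, φ a 0 = a ∧ ω a 0 = v₀) ∧
      (∀ a, IsSecondOrderSolution acc (φ a) (ω a)) ∧
      ∀ T, ∃ D > 0, ∀ a b, ∀ t ∈ Icc 0 T, dist (φ a t) (φ b t) ≤ D * dist a b := by
  choose α hα0 hα using fun a : ℝ => exists_forall_hasDerivAt_secondOrderField hcont hC (a, v₀)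
  refine ⟨fun a t => (α a t).1, fun a t => (α a t).2, fun a => by simp [hα0], fun a => ⟨fun t =>
    (hasFDerivAt_fst (𝕜 := ℝ) (p := α a t)).comp_hasDerivAt t (hα a t),
    fun t => (hasFDerivAt_snd (𝕜 := ℝ) (p := α a t)).comp_hasDerivAt t (hα a t)⟩,
    fun T => ?_⟩
  obtain ⟨C, hC⟩ := hC T
  refine ⟨exp (max 1 C * T), exp_pos _, fun a b t ht => ?_⟩
  calc dist (α a t).1 (α b t).1 ≤ dist (α a t) (α b t) := by
        rw [Prod.dist_eq]; exact le_max_left _ _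
    _ ≤ exp (max 1 C * T) * dist (α a 0) (α b 0) :=
      dist_le_exp_mul_dist_of_forall_hasDerivAt
        (fun s hs => lipschitzWith_secondOrderField (hC s ⟨by linarith [hs.1, hs.2], hs.2.le⟩).2)
        (hα a) (hα b) ht
    _ = exp (max 1 C * T) * dist a b := by simp [hα0, Prod.dist_eq]

noncomputable def pendulumAccel (g l : ℝ) (F : ℝ → ℝ) (t x : ℝ) : ℝ := (g * sin x - F t * cos x) / l

variable {g l : ℝ} {F : ℝ → ℝ}

lemma continuous_pendulumAccel (hF : Continuous F) {φ : ℝ → ℝ} (hφ : Continuous φ) :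
    Continuous fun t => pendulumAccel g l F t (φ t) := by
  unfold pendulumAccel
  fun_prop

lemma neg_pendulumAccel_neg :
    (fun t x => -pendulumAccel g l F t (-x)) = pendulumAccel g l (-F) := by
  ext t x
  simp only [pendulumAccel, sin_neg, cos_neg, Pi.neg_apply]
  ring

lemma pendulumAccel_bound_and_lipschitzWith (hl : 0 < l) {t M : ℝ} (hM : |F t| ≤ M) :
    (∀ x, |pendulumAccel g l F t x| ≤ (|g| + M) / l) ∧
      LipschitzWith ((|g| + M) / l).toNNReal (pendulumAccel g l F t) := by
  have hM0 : 0 ≤ M := (abs_nonneg _).trans hM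
  refine ⟨fun x => ?_, LipschitzWith.of_dist_le' fun x y => ?_⟩
  · rw [pendulumAccel, abs_div, abs_of_pos hl]
    gcongr
    calc |g * sin x - F t * cos x| ≤ |g| * |sin x| + |F t| * |cos x| := by
          rw [← abs_mul, ← abs_mul]; exact abs_sub _ _
      _ ≤ |g| * 1 + M * 1 :=
          add_le_add (mul_le_mul_of_nonneg_left (abs_sin_le_one x) (abs_nonneg g))
            (mul_le_mul hM (abs_cos_le_one x) (abs_nonneg _) hM0)
      _ = |g| + M := by ring
  · rw [Real.dist_eq, Real.dist_eq, pendulumAccel, pendulumAccel, ← sub_div, abs_div,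
      abs_of_pos hl, div_mul_eq_mul_div]
    gcongr
    calc |g * sin x - F t * cos x - (g * sin y - F t * cos y)|
        = |g * (sin x - sin y) - F t * (cos x - cos y)| := by ring_nf
      _ ≤ |g| * |sin x - sin y| + |F t| * |cos x - cos y| := by
          rw [← abs_mul, ← abs_mul]; exact abs_sub _ _
      _ ≤ |g| * |x - y| + M * |x - y| :=
          add_le_add (mul_le_mul_of_nonneg_left (abs_sin_sub_sin_le x y) (abs_nonneg g))
            (mul_le_mul hM (abs_cos_sub_cos_le x y) (abs_nonneg _) hM0)
      _ = (|g| + M) * |x - y| := by ring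

lemma exists_pendulumAccel_bound (hl : 0 < l) (hF : Continuous F) (T : ℝ) :
    ∃ C : ℝ≥0, ∀ t ∈ Icc (-T) T,
      (∀ x, |pendulumAccel g l F t x| ≤ C) ∧ LipschitzWith C (pendulumAccel g l F t) := by
  obtain ⟨M, hM⟩ := (isCompact_Icc (a := -T) (b := T)).exists_bound_of_continuousOn hF.continuousOn
  refine ⟨((|g| + M) / l).toNNReal, fun t ht => ?_⟩
  obtain ⟨hbd, hlip⟩ := pendulumAccel_bound_and_lipschitzWith hl (hM t ht)
  exact ⟨fun x => (hbd x).trans (Real.le_coe_toNNReal _), hlip⟩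

def ExitsAbove (c : ℝ) (φ : ℝ → ℝ) : Prop := ∃ t ≥ 0, c < φ t ∧ ∀ s ∈ Icc 0 t, -c < φ s

lemma ExitsAbove.not_neg {c : ℝ} {φ : ℝ → ℝ} (h : ExitsAbove c φ) : ¬ExitsAbove c (-φ) := by
  rintro ⟨t₂, ht₂, hlow, habove₂⟩
  obtain ⟨t₁, ht₁, hhigh, habove₁⟩ := h
  rcases le_total t₁ t₂ with h | h
  · linarith [habove₂ t₁ ⟨ht₁, h⟩, Pi.neg_apply φ t₁]
  · linarith [habove₁ t₂ ⟨ht₂, h⟩, Pi.neg_apply φ t₂]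

theorem isOpen_setOf_exitsAbove {φ : ℝ → ℝ → ℝ} (hφ : ∀ a, Continuous (φ a))
    (hdep : ∀ T, ∃ D > 0, ∀ a b, ∀ t ∈ Icc 0 T, dist (φ a t) (φ b t) ≤ D * dist a b) (c : ℝ) :
    IsOpen {a | ExitsAbove c (φ a)} := by
  refine Metric.isOpen_iff.2 fun a ⟨t, ht, hhigh, habove⟩ => ?_
  obtain ⟨D, hD, hdep⟩ := hdep t
  obtain ⟨s₀, hs₀, hmin⟩ := isCompact_Icc.exists_isMinOn (nonempty_Icc.2 ht) (hφ a).continuousOn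
  set ε := min (φ a t - c) (φ a s₀ + c)
  have hε : 0 < ε := lt_min (by linarith) (by linarith [habove s₀ hs₀])
  refine ⟨ε / D, div_pos hε hD, fun b hb => ?_⟩
  have hclose : ∀ s ∈ Icc 0 t, |φ b s - φ a s| < ε := fun s hs =>
    calc |φ b s - φ a s| = dist (φ b s) (φ a s) := (Real.dist_eq _ _).symm
      _ ≤ D * dist b a := hdep b a s hs
      _ < D * (ε / D) := by gcongr; exact hb
      _ = ε := mul_div_cancel₀ _ hD.ne'
  refine ⟨t, ht, ?_, fun s hs => ?_⟩
  · linarith [(abs_lt.1 (hclose t ⟨ht, le_rfl⟩)).1, min_le_left (φ a t - c) (φ a s₀ + c)]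
  · have : φ a s₀ ≤ φ a s := hmin hs
    linarith [(abs_lt.1 (hclose s hs)).1, min_le_right (φ a t - c) (φ a s₀ + c)]

theorem exists_mem_Ioo_notMem_of_isOpen {A B : Set ℝ} {a b : ℝ} (hab : a ≤ b) (hA : IsOpen A)
    (hB : IsOpen B) (hAB : Disjoint A B) (ha : a ∈ A) (hb : b ∈ B) :
    ∃ x ∈ Ioo a b, x ∉ A ∧ x ∉ B := by
  by_contra! hcon
  have hsub : Icc a b ⊆ A ∪ B := by
    intro x hx
    by_cases hxA : x ∈ A
    · exact Or.inl hxA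
    rcases hx.1.eq_or_lt with rfl | h₁
    · exact absurd ha hxA
    rcases hx.2.eq_or_lt with rfl | h₂
    · exact Or.inr hb
    exact Or.inr (hcon x ⟨h₁, h₂⟩ hxA)
  obtain ⟨x, -, hxA, hxB⟩ := isPreconnected_Icc A B hA hB hsub ⟨a, left_mem_Icc.2 hab, ha⟩
    ⟨b, right_mem_Icc.2 hab, hb⟩
  exact hAB.ne_of_mem hxA hxB rfl

section Exit

variable {φ ω : ℝ → ℝ} (hg : 0 < g) (hl : 0 < l) (hF : Continuous F)
  (hs : IsSecondOrderSolution (pendulumAccel g l F) φ ω) (hω0 : ω 0 = 0)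
include hg hl hF hs hω0

lemma exitsAbove_of_first_hit {t₀ : ℝ} (ht₀ : 0 ≤ t₀)
    (hbefore : ∀ s ∈ Ico 0 t₀, φ s ∈ Ioo (-(π / 2)) (π / 2)) (hhit : π / 2 ≤ φ t₀) :
    ExitsAbove (π / 2) φ := by
  have hpi : 0 < π / 2 := by positivity
  rcases hhit.lt_or_eq with hlt | heq
  · refine ⟨t₀, ht₀, hlt, fun s hs => ?_⟩
    rcases hs.2.lt_or_eq with h | rfl
    · exact (hbefore s ⟨hs.1, h⟩).1
    · linarith
  have hω₀ : 0 ≤ ω t₀ := by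
    rcases ht₀.eq_or_lt with rfl | hpos
    · exact hω0.ge
    · refine (hs.hasDerivAt t₀).nonneg_of_eventually_le_left ?_
      filter_upwards [Ioo_mem_nhdsLT hpos] with s hs
      exact heq ▸ (hbefore s ⟨hs.1.le, hs.2⟩).2.le
  have haccel : 0 < pendulumAccel g l F t₀ (φ t₀) := by
    rw [← heq, pendulumAccel, sin_pi_div_two, cos_pi_div_two, mul_one, mul_zero, sub_zero]
    exact div_pos hg hl
  obtain ⟨u, htu, hmono⟩ := hs.exists_strictMonoOn_Icc
    (continuous_pendulumAccel hF hs.continuous).continuousAt hω₀ haccel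
  refine ⟨u, by linarith, heq ▸ hmono (left_mem_Icc.2 htu.le) (right_mem_Icc.2 htu.le) htu,
    fun s hs => ?_⟩
  rcases lt_or_ge s t₀ with h | h
  · exact (hbefore s ⟨hs.1, h⟩).1
  · linarith [hmono.monotoneOn (left_mem_Icc.2 htu.le) ⟨h, hs.2⟩ h]

lemma exitsAbove_neg_of_first_hit {t₀ : ℝ} (ht₀ : 0 ≤ t₀)
    (hbefore : ∀ s ∈ Ico 0 t₀, φ s ∈ Ioo (-(π / 2)) (π / 2)) (hhit : φ t₀ ≤ -(π / 2)) :
    ExitsAbove (π / 2) (-φ) := by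
  have hneg : IsSecondOrderSolution (pendulumAccel g l (-F)) (-φ) (-ω) := by
    rw [← neg_pendulumAccel_neg]
    exact hs.neg
  refine exitsAbove_of_first_hit hg hl hF.neg hneg (by simp [hω0]) ht₀ (fun s hs => ?_)
    (by simp only [Pi.neg_apply]; linarith)
  simp only [Pi.neg_apply, neg_mem_Ioo_iff, neg_neg]
  exact hbefore s hs

lemma exitsAbove_or_exitsAbove_neg (hleave : ∃ t ≥ 0, φ t ∉ Ioo (-(π / 2)) (π / 2)) :
    ExitsAbove (π / 2) φ ∨ ExitsAbove (π / 2) (-φ) := by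
  set S := {t | 0 ≤ t ∧ φ t ∉ Ioo (-(π / 2)) (π / 2)}
  have hS : IsClosed S := isClosed_Ici.inter (isOpen_Ioo.preimage hs.continuous).isClosed_compl
  have hbdd : BddBelow S := ⟨0, fun s hs => hs.1⟩
  obtain ⟨ht₀, hout⟩ : sInf S ∈ S := hS.csInf_mem hleave hbdd
  have hbefore : ∀ s ∈ Ico 0 (sInf S), φ s ∈ Ioo (-(π / 2)) (π / 2) := fun s hs => by
    by_contra h
    exact (csInf_le hbdd ⟨hs.1, h⟩).not_gt hs.2
  rw [mem_Ioo, not_and_or, not_lt, not_lt] at hout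
  rcases hout with hlow | hhigh
  · exact Or.inr (exitsAbove_neg_of_first_hit hg hl hF hs hω0 ht₀ hbefore hlow)
  · exact Or.inl (exitsAbove_of_first_hit hg hl hF hs hω0 ht₀ hbefore hhigh)

end Exit

end InvertedPendulum

open Real InvertedPendulum

theorem stmt_6 (g l : ℝ) (hg : 0 < g) (hl : 0 < l)
    (f : ℝ → ℝ) (hf : ContDiff ℝ 2 f) :
    ∃ φ₀ ∈ Set.Ioo (-(π / 2)) (π / 2), ∃ φ : ℝ → ℝ,
      ContDiff ℝ 2 φ ∧
      (∀ t ≥ 0, deriv (deriv φ) t =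
        (g / l) * Real.sin (φ t) - (deriv (deriv f) t / l) * Real.cos (φ t)) ∧
      φ 0 = φ₀ ∧ deriv φ 0 = 0 ∧
      ∀ t ≥ 0, φ t ∈ Set.Ioo (-(π / 2)) (π / 2) := by
  have hF : Continuous (deriv (deriv f)) := (hf.iterate_deriv' 0 2).continuous
  obtain ⟨φ, ω, hinit, hsol, hdep⟩ := exists_isSecondOrderSolution_family
    (fun _ => continuous_pendulumAccel (g := g) (l := l) hF continuous_const)
    (exists_pendulumAccel_bound hl hF) 0
  have hφ (a : ℝ) : Continuous (φ a) := (hsol a).continuous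
  have hdep_neg : ∀ T, ∃ D > 0, ∀ a b, ∀ t ∈ Set.Icc 0 T, dist (-φ a t) (-φ b t) ≤ D * dist a b :=
    by simpa only [dist_neg_neg] using hdep
  obtain ⟨a, ha, hleft, hright⟩ := exists_mem_Ioo_notMem_of_isOpen
    (A := {a | ExitsAbove (π / 2) (-φ a)}) (B := {a | ExitsAbove (π / 2) (φ a)})
    (by linarith [pi_pos]) (isOpen_setOf_exitsAbove (fun a => (hφ a).neg) hdep_neg _)
    (isOpen_setOf_exitsAbove hφ hdep _) (Set.disjoint_left.2 fun _ hA hB => hB.not_neg hA)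
    (exitsAbove_neg_of_first_hit hg hl hF (hsol _) (hinit _).2 le_rfl (by simp)
      (hinit _).1.le)
    (exitsAbove_of_first_hit hg hl hF (hsol _) (hinit _).2 le_rfl (by simp) (hinit _).1.ge)
  refine ⟨a, ha, φ a, (hsol a).contDiff_two (continuous_pendulumAccel hF (hφ a)),
    fun t _ => ?_, (hinit a).1, ?_, fun t ht => ?_⟩
  · rw [(hsol a).deriv_deriv, pendulumAccel, sub_div, mul_div_right_comm, mul_div_right_comm]
  · rw [((hsol a).hasDerivAt 0).deriv, (hinit a).2]
  · by_contra hfall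
    exact (exitsAbove_or_exitsAbove_neg hg hl hF (hsol a) (hinit a).2 ⟨t, ht, hfall⟩).elim
      hright hleft
end

section
/- Suppose (φ, p) solves φ' = p, p' = (g/l)·sin φ − (f''/l)·cos φ, and at time t₀: p(t₀) = p' (a constant), φ(t₀) = arctan(f''(t₀)/g) (so ṗ(t₀) = 0), with p' > sup_t |f'''(t)|/g and p' > 0. Then p''(t₀) = (g/l)·p'·cos φ(t₀) − (f'''(t₀)/l)·cos φ(t₀) + ((f''(t₀))²/(g l))·p'·cos φ(t₀) > 0. -/
/-!
Differentiate the equation of motion once more along the solution. At `t₀` the angle is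
`arctan (f''(t₀) / g)`, so `cos φ(t₀) > 0` and `sin φ(t₀) = (f''(t₀) / g) cos φ(t₀)`; the
second derivative becomes `cos φ(t₀) / l · ((g p' - f'''(t₀)) + f''(t₀)² p' / g)`, and both
summands are nonnegative, the first strictly since `|f'''| < g p'`.
-/

open Real

lemma Real.sin_arctan_eq_mul_cos_arctan (x : ℝ) : sin (arctan x) = x * cos (arctan x) := by
  rw [sin_arctan, cos_arctan]
  ring

lemma ContDiff.differentiable_deriv_deriv {f : ℝ → ℝ} (hf : ContDiff ℝ 3 f) :
    Differentiable ℝ (deriv (deriv f)) :=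
  (hf.iterate_deriv' 1 2).differentiable one_ne_zero

lemma hasDerivAt_forcedPendulumField {φ F : ℝ → ℝ} {ω F' a b t : ℝ}
    (hφ : HasDerivAt φ ω t) (hF : HasDerivAt F F' t) :
    HasDerivAt (fun s => a * sin (φ s) - F s / b * cos (φ s))
      (a * ω * cos (φ t) - F' / b * cos (φ t) + F t / b * ω * sin (φ t)) t :=
  ((hφ.sin.const_mul a).sub ((hF.div_const b).mul hφ.cos)).congr_deriv (by ring)

lemma forcedPendulum_secondDeriv_pos {g l p' A B c : ℝ} (hg : 0 < g) (hl : 0 < l)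
    (hp' : 0 < p') (hc : 0 < c) (hB : |B| / g < p') :
    0 < g / l * p' * c - B / l * c + A ^ 2 / (g * l) * p' * c := by
  have hBg : B < g * p' := (le_abs_self B).trans_lt (by rwa [div_lt_iff₀' hg] at hB)
  have hsplit : g / l * p' * c - B / l * c + A ^ 2 / (g * l) * p' * c
      = (g * p' - B) * c / l + A ^ 2 / (g * l) * p' * c := by ring
  rw [hsplit]
  have hfirst := div_pos (mul_pos (sub_pos.2 hBg) hc) hl
  positivity

theorem stmt_9 (g l : ℝ) (hg : 0 < g) (hl : 0 < l)
    (f : ℝ → ℝ) (hf : ContDiff ℝ 3 f)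
    (φ p : ℝ → ℝ) (hφ : ContDiff ℝ 2 φ)
    (hp : ∀ t, p t = deriv φ t)
    (hode : ∀ t, deriv p t =
      (g / l) * Real.sin (φ t) - (deriv (deriv f) t / l) * Real.cos (φ t))
    (p' t₀ : ℝ) (hp'pos : 0 < p')
    (hp'sup : ∀ t, |deriv (deriv (deriv f)) t| / g < p')
    (hpt₀ : p t₀ = p')
    (hφt₀ : φ t₀ = Real.arctan (deriv (deriv f) t₀ / g)) :
    deriv (deriv p) t₀ =
      (g / l) * p' * Real.cos (φ t₀)
        - (deriv (deriv (deriv f)) t₀ / l) * Real.cos (φ t₀)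
        + ((deriv (deriv f) t₀) ^ 2 / (g * l)) * p' * Real.cos (φ t₀) ∧
    0 < deriv (deriv p) t₀ := by
  have hφ' : HasDerivAt φ p' t₀ := by
    rw [← hpt₀, hp]
    exact (hφ.differentiable two_ne_zero t₀).hasDerivAt
  have hsin : sin (φ t₀) = deriv (deriv f) t₀ / g * cos (φ t₀) := by
    rw [hφt₀, sin_arctan_eq_mul_cos_arctan]
  have hformula : deriv (deriv p) t₀ =
      (g / l) * p' * cos (φ t₀) - (deriv (deriv (deriv f)) t₀ / l) * cos (φ t₀)
        + ((deriv (deriv f) t₀) ^ 2 / (g * l)) * p' * cos (φ t₀) := by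
    rw [funext hode,
      (hasDerivAt_forcedPendulumField hφ'
        (hf.differentiable_deriv_deriv t₀).hasDerivAt).deriv, hsin]
    field_simp
  refine ⟨hformula, hformula ▸ forcedPendulum_secondDeriv_pos hg hl hp'pos ?_ (hp'sup t₀)⟩
  rw [hφt₀]
  exact cos_arctan_pos _
end

section
/- Let h : [a,b] × W_a → W be a homeomorphism with π₁ ∘ h = π₁ and h([a,b] × W_a⁻⁻) = W⁻⁻, and let h' be another such homeomorphism. Then the monodromy maps m(x) = π₂ h(b, π₂ h⁻¹(a, x)) and m'(x) = π₂ h'(b, π₂ h'⁻¹(a, x)) are homotopic as maps of pairs (W_a, W_a⁻⁻) → (W_a, W_a⁻⁻). -/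
/-!
Write `G t := h'_t⁻¹ ∘ h_t` for the transition map between the two trivialisations over the
time `t ∈ [a,b]`; it is an endomorphism of the pair `(W_a, W_a⁻⁻)` depending continuously on `t`.
Running `t` from `b` down to `a` in `h'_b ∘ G t ∘ h_a⁻¹` is then a homotopy of pairs, starting at
`h'_b ∘ h'_b⁻¹ ∘ h_b ∘ h_a⁻¹ = m` and ending at `h'_b ∘ h'_a⁻¹ ∘ h_a ∘ h_a⁻¹ = m'`.
-/

open Set

/-- `h` (with fiberwise inverse `hinv`) is a homeomorphism of the pair
`([a,b] × Wa, [a,b] × Wamm)` onto `(W, Wmm)` commuting with the projection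
onto the time interval `[a,b]`. -/
def IsFiberedPairHomeo {M : Type*} [TopologicalSpace M]
    (a b : ℝ) (Wa Wamm : Set M) (W Wmm : Set (ℝ × M))
    (h hinv : ℝ → M → M) : Prop :=
  ContinuousOn (fun q : ℝ × M => h q.1 q.2) (Icc a b ×ˢ Wa) ∧
  ContinuousOn (fun q : ℝ × M => hinv q.1 q.2) W ∧
  (∀ t ∈ Icc a b, ∀ x ∈ Wa, (t, h t x) ∈ W) ∧
  (∀ t ∈ Icc a b, ∀ x ∈ Wamm, (t, h t x) ∈ Wmm) ∧
  (∀ q ∈ W, q.1 ∈ Icc a b ∧ hinv q.1 q.2 ∈ Wa ∧ h q.1 (hinv q.1 q.2) = q.2) ∧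
  (∀ q ∈ Wmm, hinv q.1 q.2 ∈ Wamm) ∧
  (∀ t ∈ Icc a b, ∀ x ∈ Wa, hinv t (h t x) = x)

def IsPairHomotopy {X Y : Type*} [TopologicalSpace X] [TopologicalSpace Y]
    (A A' : Set X) (B B' : Set Y) (f g : X → Y) (H : ℝ → X → Y) : Prop :=
  ContinuousOn (fun q : ℝ × X => H q.1 q.2) (Icc (0 : ℝ) 1 ×ˢ A) ∧
    (∀ x ∈ A, H 0 x = f x) ∧ (∀ x ∈ A, H 1 x = g x) ∧
    (∀ s ∈ Icc (0 : ℝ) 1, MapsTo (H s) A B) ∧ (∀ s ∈ Icc (0 : ℝ) 1, MapsTo (H s) A' B')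

namespace IsPairHomotopy

variable {X Y Z : Type*} [TopologicalSpace X] [TopologicalSpace Y] [TopologicalSpace Z]
  {A A' : Set X} {B B' : Set Y} {f g : X → Y} {H : ℝ → X → Y}

theorem congr_ends (hH : IsPairHomotopy A A' B B' f g H) {f₁ g₁ : X → Y}
    (hf : EqOn f f₁ A) (hg : EqOn g g₁ A) : IsPairHomotopy A A' B B' f₁ g₁ H :=
  ⟨hH.1, fun x hx => (hH.2.1 x hx).trans (hf hx), fun x hx => (hH.2.2.1 x hx).trans (hg hx),
    hH.2.2.2⟩

theorem comp_left (hH : IsPairHomotopy A A' B B' f g H) {C C' : Set Z} {φ : Y → Z}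
    (hφ : ContinuousOn φ B) (hφC : MapsTo φ B C) (hφC' : MapsTo φ B' C') :
    IsPairHomotopy A A' C C' (φ ∘ f) (φ ∘ g) (fun s => φ ∘ H s) := by
  obtain ⟨hcont, h0, h1, hmaps, hmaps'⟩ := hH
  refine ⟨hφ.comp hcont fun q hq => hmaps q.1 hq.1 hq.2, fun x hx => congrArg φ (h0 x hx),
    fun x hx => congrArg φ (h1 x hx), fun s hs => hφC.comp (hmaps s hs),
    fun s hs => hφC'.comp (hmaps' s hs)⟩

theorem comp_right (hH : IsPairHomotopy A A' B B' f g H) {W W' : Set Z} {ψ : Z → X}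
    (hψ : ContinuousOn ψ W) (hψA : MapsTo ψ W A) (hψA' : MapsTo ψ W' A') :
    IsPairHomotopy W W' B B' (f ∘ ψ) (g ∘ ψ) (fun s => H s ∘ ψ) := by
  obtain ⟨hcont, h0, h1, hmaps, hmaps'⟩ := hH
  refine ⟨hcont.comp (continuous_fst.continuousOn.prodMk (hψ.comp continuous_snd.continuousOn
    fun q hq => hq.2)) fun q hq => ⟨hq.1, hψA hq.2⟩, fun x hx => h0 _ (hψA hx),
    fun x hx => h1 _ (hψA hx), fun s hs => (hmaps s hs).comp hψA,
    fun s hs => (hmaps' s hs).comp hψA'⟩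

end IsPairHomotopy

theorem isPairHomotopy_of_continuousOn_Icc {X Y : Type*} [TopologicalSpace X]
    [TopologicalSpace Y] {A A' : Set X} {B B' : Set Y} {a b : ℝ} (hab : a ≤ b)
    {G : ℝ → X → Y} (hG : ContinuousOn (fun q : ℝ × X => G q.1 q.2) (Icc a b ×ˢ A))
    (hGB : ∀ t ∈ Icc a b, MapsTo (G t) A B) (hGB' : ∀ t ∈ Icc a b, MapsTo (G t) A' B') :
    IsPairHomotopy A A' B B' (G b) (G a) (fun s => G (b + s * (a - b))) := by
  have hmem : ∀ s ∈ Icc (0 : ℝ) 1, b + s * (a - b) ∈ Icc a b := fun s ⟨hs0, hs1⟩ =>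
    ⟨by nlinarith, by nlinarith⟩
  have hpath : Continuous fun q : ℝ × X => (b + q.1 * (a - b), q.2) := by fun_prop
  refine ⟨hG.comp hpath.continuousOn fun q hq => ⟨hmem q.1 hq.1, hq.2⟩, fun x _ => by simp,
    fun x _ => by simp, fun s hs => hGB _ (hmem s hs), fun s hs => hGB' _ (hmem s hs)⟩

namespace IsFiberedPairHomeo

variable {M : Type*} [TopologicalSpace M] {a b t : ℝ} {Wa Wamm : Set M} {W Wmm : Set (ℝ × M)}
  {h hinv h' hinv' : ℝ → M → M}

theorem continuousOn_apply (hh : IsFiberedPairHomeo a b Wa Wamm W Wmm h hinv)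
    (ht : t ∈ Icc a b) : ContinuousOn (h t) Wa :=
  hh.1.comp (Continuous.prodMk_right t).continuousOn fun _ hx => ⟨ht, hx⟩

theorem continuousOn_inv_apply (hh : IsFiberedPairHomeo a b Wa Wamm W Wmm h hinv)
    {A : Set M} (hA : ∀ x ∈ A, (t, x) ∈ W) : ContinuousOn (hinv t) A :=
  hh.2.1.comp (Continuous.prodMk_right t).continuousOn hA

theorem mem_of_mem (hh : IsFiberedPairHomeo a b Wa Wamm W Wmm h hinv) (ht : t ∈ Icc a b)
    {x : M} (hx : x ∈ Wa) : (t, h t x) ∈ W :=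
  hh.2.2.1 t ht x hx

theorem mem_mm_of_mem (hh : IsFiberedPairHomeo a b Wa Wamm W Wmm h hinv) (ht : t ∈ Icc a b)
    {x : M} (hx : x ∈ Wamm) : (t, h t x) ∈ Wmm :=
  hh.2.2.2.1 t ht x hx

theorem inv_mem (hh : IsFiberedPairHomeo a b Wa Wamm W Wmm h hinv) {x : M}
    (hx : (t, x) ∈ W) : hinv t x ∈ Wa :=
  (hh.2.2.2.2.1 (t, x) hx).2.1

theorem inv_mem_mm (hh : IsFiberedPairHomeo a b Wa Wamm W Wmm h hinv) {x : M}
    (hx : (t, x) ∈ Wmm) : hinv t x ∈ Wamm :=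
  hh.2.2.2.2.2.1 (t, x) hx

theorem apply_inv (hh : IsFiberedPairHomeo a b Wa Wamm W Wmm h hinv) {x : M}
    (hx : (t, x) ∈ W) : h t (hinv t x) = x :=
  (hh.2.2.2.2.1 (t, x) hx).2.2

theorem continuousOn_transition (hh : IsFiberedPairHomeo a b Wa Wamm W Wmm h hinv)
    (hh' : IsFiberedPairHomeo a b Wa Wamm W Wmm h' hinv') :
    ContinuousOn (fun q : ℝ × M => hinv' q.1 (h q.1 q.2)) (Icc a b ×ˢ Wa) :=
  hh'.2.1.comp (continuous_fst.continuousOn.prodMk hh.1) fun _ hq => hh.mem_of_mem hq.1 hq.2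

theorem mapsTo_transition (hh : IsFiberedPairHomeo a b Wa Wamm W Wmm h hinv)
    (hh' : IsFiberedPairHomeo a b Wa Wamm W Wmm h' hinv') (ht : t ∈ Icc a b) :
    MapsTo (fun x => hinv' t (h t x)) Wa Wa :=
  fun _ hx => hh'.inv_mem (hh.mem_of_mem ht hx)

theorem mapsTo_transition_mm (hh : IsFiberedPairHomeo a b Wa Wamm W Wmm h hinv)
    (hh' : IsFiberedPairHomeo a b Wa Wamm W Wmm h' hinv') (ht : t ∈ Icc a b) :
    MapsTo (fun x => hinv' t (h t x)) Wamm Wamm :=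
  fun _ hx => hh'.inv_mem_mm (hh.mem_mm_of_mem ht hx)

end IsFiberedPairHomeo

theorem stmt_13_general {M : Type*} [TopologicalSpace M]
    (a b : ℝ) (hab : a < b)
    (Wa Wamm : Set M) (W Wmm : Set (ℝ × M))
    (hWa : ∀ x, (a, x) ∈ W ↔ x ∈ Wa) (hWb : ∀ x, (b, x) ∈ W ↔ x ∈ Wa)
    (hWamm : ∀ x, (a, x) ∈ Wmm ↔ x ∈ Wamm) (hWbmm : ∀ x, (b, x) ∈ Wmm ↔ x ∈ Wamm)
    (h hinv h' hinv' : ℝ → M → M)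
    (hh : IsFiberedPairHomeo a b Wa Wamm W Wmm h hinv)
    (hh' : IsFiberedPairHomeo a b Wa Wamm W Wmm h' hinv')
    (m m' : M → M)
    (hm : ∀ x ∈ Wa, m x = h b (hinv a x))
    (hm' : ∀ x ∈ Wa, m' x = h' b (hinv' a x)) :
    ∃ H : ℝ → M → M,
      ContinuousOn (fun q : ℝ × M => H q.1 q.2) (Icc (0 : ℝ) 1 ×ˢ Wa) ∧
      (∀ x ∈ Wa, H 0 x = m x) ∧
      (∀ x ∈ Wa, H 1 x = m' x) ∧
      (∀ s ∈ Icc (0 : ℝ) 1, MapsTo (H s) Wa Wa) ∧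
      (∀ s ∈ Icc (0 : ℝ) 1, MapsTo (H s) Wamm Wamm) := by
  have hbI : b ∈ Icc a b := right_mem_Icc.2 hab.le
  have hinv_a : ∀ {x}, x ∈ Wa → hinv a x ∈ Wa := fun hx => hh.inv_mem ((hWa _).2 hx)
  have transition := isPairHomotopy_of_continuousOn_Icc (A' := Wamm) (B' := Wamm) hab.le
    (hh.continuousOn_transition hh') (fun _ => hh.mapsTo_transition hh')
    (fun _ => hh.mapsTo_transition_mm hh')
  have conjugated := (transition.comp_left (hh'.continuousOn_apply hbI)
      (fun _ hx => (hWb _).1 (hh'.mem_of_mem hbI hx))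
      (fun _ hx => (hWbmm _).1 (hh'.mem_mm_of_mem hbI hx))).comp_right
    (hh.continuousOn_inv_apply fun _ hx => (hWa _).2 hx) (fun _ => hinv_a)
    (fun _ hx => hh.inv_mem_mm ((hWamm _).2 hx))
  refine ⟨fun s x => h' b (hinv' (b + s * (a - b)) (h (b + s * (a - b)) (hinv a x))),
    (conjugated.congr_ends (fun x hx => ?_) (fun x hx => ?_) :
      IsPairHomotopy Wa Wamm Wa Wamm m m' _)⟩
  · simp only [Function.comp_apply, hm x hx, hh'.apply_inv (hh.mem_of_mem hbI (hinv_a hx))]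
  · simp only [Function.comp_apply, hm' x hx, hh.apply_inv ((hWa _).2 hx)]

/-- Monodromy maps obtained from two different fibered homeomorphisms of a
periodic Ważewski segment are homotopic as maps of pairs
`(W_a, W_a⁻⁻) → (W_a, W_a⁻⁻)`. -/
theorem stmt_13 {M : Type*} [TopologicalSpace M]
    (a b : ℝ) (hab : a < b)
    (Wa Wamm : Set M) (W Wmm : Set (ℝ × M))
    (hWcpt : IsCompact W) (hWmmcpt : IsCompact Wmm) (hWmmW : Wmm ⊆ W)
    (hWa : ∀ x, (a, x) ∈ W ↔ x ∈ Wa) (hWb : ∀ x, (b, x) ∈ W ↔ x ∈ Wa)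
    (hWamm : ∀ x, (a, x) ∈ Wmm ↔ x ∈ Wamm) (hWbmm : ∀ x, (b, x) ∈ Wmm ↔ x ∈ Wamm)
    (h hinv h' hinv' : ℝ → M → M)
    (hh : IsFiberedPairHomeo a b Wa Wamm W Wmm h hinv)
    (hh' : IsFiberedPairHomeo a b Wa Wamm W Wmm h' hinv')
    (m m' : M → M)
    (hm : ∀ x ∈ Wa, m x = h b (hinv a x))
    (hm' : ∀ x ∈ Wa, m' x = h' b (hinv' a x)) :
    ∃ H : ℝ → M → M,
      ContinuousOn (fun q : ℝ × M => H q.1 q.2) (Icc (0 : ℝ) 1 ×ˢ Wa) ∧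
      (∀ x ∈ Wa, H 0 x = m x) ∧
      (∀ x ∈ Wa, H 1 x = m' x) ∧
      (∀ s ∈ Icc (0 : ℝ) 1, MapsTo (H s) Wa Wa) ∧
      (∀ s ∈ Icc (0 : ℝ) 1, MapsTo (H s) Wamm Wamm) :=
  stmt_13_general a b hab Wa Wamm W Wmm hWa hWb hWamm hWbmm h hinv h' hinv' hh hh' m m' hm hm'
end
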